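/- Let κ be a regular cardinal and μ < κ an infinite cardinal with 2^μ ≥ κ. Then there exists a splitting family on κ of cardinality at most μ. Consequently, if every family of fewer than κ subsets of κ fails to be splitting, then κ is a strong limit cardinal. -/

import Mathlib

/-!
Fix an injection `f : κ → 2^μ` and let `x_i = {β | f β i = 1}` for `i < μ`. If a set `a` of size
`κ` were split by no `x_i`, each `i` would have a minority value `b i` taken by fewer than `κ`
points of `a`. By regularity, fewer than `κ` points of `a` take some minority value, so `κ` many
take none; but those all have `f`-value `fun i ↦ !b i`, contradicting injectivity.
-/

open Cardinal

universe u

/-- `x` splits `a`: both `a ∩ x` and `a \ x` have full cardinality `#α`. -/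
def Splits {α : Type u} (x a : Set α) : Prop :=
  #↥(a ∩ x) = #α ∧ #↥(a \ x) = #α

/-- `F` is a splitting family on `α`. -/
def IsSplittingFamily {α : Type u} (F : Set (Set α)) : Prop :=
  ∀ a : Set α, #↥a = #α → ∃ x ∈ F, Splits x a

open Set Function

variable {α : Type u}

lemma exists_mk_inter_preimage_lt_of_not_splits {g : α → Bool} {a : Set α}
    (h : ¬ Splits {β | g β = true} a) : ∃ b : Bool, #↥(a ∩ g ⁻¹' {b}) < #α := by
  rcases not_and_or.1 h with h | h
  · exact ⟨true, (mk_set_le _).lt_of_ne h⟩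
  · refine ⟨false, (mk_set_le _).lt_of_ne ?_⟩
    convert h using 4
    ext β
    simp

lemma isSplittingFamily_range_of_injective {ι : Type u} (hreg : (#α).IsRegular) (hι : #ι < #α)
    {f : α → ι → Bool} (hf : Injective f) :
    IsSplittingFamily (range fun i ↦ {β | f β i = true}) := by
  intro a ha
  by_contra! hsplit
  choose b hb using fun i ↦
    exists_mk_inter_preimage_lt_of_not_splits (hsplit _ (mem_range_self i))
  set U := ⋃ i, a ∩ (f · i) ⁻¹' {b i}
  have hU : #U < #α := (card_iUnion_lt_iff_forall_of_isRegular hreg hι).2 hb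
  have hcover : a ⊆ U ∪ f ⁻¹' {fun i ↦ !b i} := by
    intro β hβ
    refine or_iff_not_imp_left.2 fun hβU ↦ funext fun i ↦ ?_
    exact Bool.eq_not.2 fun h ↦ hβU (mem_iUnion.2 ⟨i, hβ, h⟩)
  have hfiber : #↥(f ⁻¹' {fun i ↦ !b i}) < #α :=
    calc #↥(f ⁻¹' {fun i ↦ !b i}) ≤ #({fun i ↦ !b i} : Set (ι → Bool)) :=
          mk_preimage_of_injective f _ hf
      _ = 1 := mk_singleton _
      _ < #α := one_lt_aleph0.trans_le hreg.aleph0_le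
  refine ha.not_lt ?_
  calc #↥a ≤ #↥(U ∪ f ⁻¹' {fun i ↦ !b i}) := mk_le_mk_of_subset hcover
    _ ≤ #U + #↥(f ⁻¹' {fun i ↦ !b i}) := mk_union_le _ _
    _ < #α := add_lt_of_lt hreg.aleph0_le hU hfiber

lemma exists_isSplittingFamily_mk_le (hreg : (#α).IsRegular) {μ : Cardinal.{u}} (hμκ : μ < #α)
    (hpow : #α ≤ 2 ^ μ) : ∃ F : Set (Set α), IsSplittingFamily F ∧ #↥F ≤ μ := by
  obtain ⟨f⟩ : Nonempty (α ↪ (μ.out → Bool)) := by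
    rw [← le_def]
    simpa using hpow
  exact ⟨_, isSplittingFamily_range_of_injective hreg (by rwa [mk_out]) f.injective,
    mk_range_le.trans (mk_out μ).le⟩

lemma isStrongLimit_of_forall_not_isSplittingFamily (hreg : (#α).IsRegular)
    (h : ∀ F : Set (Set α), #↥F < #α → ¬ IsSplittingFamily F) : (#α).IsStrongLimit :=
  ⟨hreg.pos.ne', fun _ hc ↦ not_le.1 fun hpow ↦
    let ⟨F, hF, hFc⟩ := exists_isSplittingFamily_mk_le hreg hc hpow
    h F (hFc.trans_lt hc) hF⟩

theorem splitting_family_of_size_mu_general {α : Type u} (hreg : (#α).IsRegular)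
    (μ : Cardinal.{u}) (hμκ : μ < #α) (hpow : #α ≤ 2 ^ μ) :
    (∃ F : Set (Set α), IsSplittingFamily F ∧ #↥F ≤ μ) ∧
      ((∀ F : Set (Set α), #↥F < #α → ¬ IsSplittingFamily F) →
        (#α).IsStrongLimit) :=
  ⟨exists_isSplittingFamily_mk_le hreg hμκ hpow,
    isStrongLimit_of_forall_not_isSplittingFamily hreg⟩

theorem splitting_family_of_size_mu {α : Type u} (hreg : (#α).IsRegular)
    (μ : Cardinal.{u}) (hμinf : ℵ₀ ≤ μ) (hμκ : μ < #α) (hpow : #α ≤ 2 ^ μ) :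
    (∃ F : Set (Set α), IsSplittingFamily F ∧ #↥F ≤ μ) ∧
      ((∀ F : Set (Set α), #↥F < #α → ¬ IsSplittingFamily F) →
        (#α).IsStrongLimit) :=
  splitting_family_of_size_mu_general hreg μ hμκ hpow
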